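/- Let X be a nonempty measurable space and ν a Markov kernel from X to ℝ such that for every x the measure ν(x) has a finite second moment. Define the conditional mean f*(x) = ∫ y dν(x)(y). Let M be any set of probability measures on X that contains all Dirac measures δ_x for x ∈ X. Then for every measurable f : X → ℝ, ⨆_{m ∈ M} ∫ (y − f*(x))² d(m ⊗ ν)(x, y) ≤ ⨆_{m ∈ M} ∫ (y − f(x))² d(m ⊗ ν)(x, y), with integrals of the nonnegative integrands taken in the extended nonnegative reals. -/

import Mathlib

/-!
For each `x`, the mean of `ν x` minimizes the expected squared error `∫⁻ (y - c)² ∂ν x` over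
constants `c`. Hence under any intervention `m` the risk of `fstar` averages these pointwise
minima, each of which is at most the risk of `f` under the hard intervention `δ_x ∈ M`.
-/

open MeasureTheory ProbabilityTheory

namespace ProbabilityTheory

variable {Ω : Type*} {mΩ : MeasurableSpace Ω} {μ : Measure Ω} [IsProbabilityMeasure μ]
  {X : Ω → ℝ}

lemma evariance_sub_const (hX : AEStronglyMeasurable X μ) (c : ℝ) :
    eVar[fun ω ↦ X ω - c; μ] = eVar[X; μ] := by
  by_cases hX₂ : MemLp X 2 μ
  · have hXc₂ : MemLp (fun ω ↦ X ω - c) 2 μ := hX₂.sub (memLp_const c)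
    rw [← ofReal_variance hX₂, ← ofReal_variance hXc₂, variance_sub_const hX]
  · have hXc₂ : ¬ MemLp (fun ω ↦ X ω - c) 2 μ := fun h ↦
      hX₂ (by simpa [Pi.add_def] using h.add (memLp_const c))
    rw [evariance_eq_top hX hX₂, evariance_eq_top (by fun_prop) hXc₂]

lemma evariance_le_lintegral_sub_sq (hX : AEStronglyMeasurable X μ) (c : ℝ) :
    eVar[X; μ] ≤ ∫⁻ ω, ENNReal.ofReal ((X ω - c) ^ 2) ∂μ := by
  rw [← evariance_sub_const hX c, evariance_def' (by fun_prop)]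
  refine tsub_le_self.trans_eq (lintegral_congr fun ω ↦ ?_)
  rw [← enorm_pow, Real.enorm_of_nonneg (sq_nonneg _)]

end ProbabilityTheory

namespace MeasureTheory.Measure

variable {α β : Type*} {mα : MeasurableSpace α} {mβ : MeasurableSpace β}
  {κ : Kernel α β} [IsSFiniteKernel κ] {g : α × β → ENNReal}

lemma lintegral_dirac_compProd (hg : Measurable g) (a : α) :
    ∫⁻ p, g p ∂(dirac a ⊗ₘ κ) = ∫⁻ b, g (a, b) ∂κ a := by
  rw [lintegral_compProd hg, lintegral_dirac' a (hg.lintegral_kernel_prod_right' (κ := κ))]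

lemma lintegral_compProd_le_of_forall_le {m : Measure α} [IsProbabilityMeasure m]
    (hg : Measurable g) {S : ENNReal} (hS : ∀ a, ∫⁻ b, g (a, b) ∂κ a ≤ S) :
    ∫⁻ p, g p ∂(m ⊗ₘ κ) ≤ S := by
  rw [lintegral_compProd hg]
  exact (lintegral_mono hS).trans_eq (by simp)

end MeasureTheory.Measure

theorem minimax_optimality_over_family_containing_diracs_general
    {X : Type*} [MeasurableSpace X]
    (ν : Kernel X ℝ) [IsMarkovKernel ν]
    (fstar : X → ℝ) (hfstar : ∀ x, fstar x = ∫ y, y ∂ν x)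
    (M : Set (Measure X)) (hM : ∀ m ∈ M, IsProbabilityMeasure m)
    (hdirac : ∀ x : X, Measure.dirac x ∈ M) :
    ∀ f : X → ℝ, Measurable f →
      (⨆ m ∈ M, ∫⁻ p : X × ℝ, ENNReal.ofReal ((p.2 - fstar p.1) ^ 2) ∂(m ⊗ₘ ν))
        ≤ ⨆ m ∈ M, ∫⁻ p : X × ℝ, ENNReal.ofReal ((p.2 - f p.1) ^ 2) ∂(m ⊗ₘ ν) := by
  have hsq_err : ∀ g : X → ℝ, Measurable g →
      Measurable fun p : X × ℝ ↦ ENNReal.ofReal ((p.2 - g p.1) ^ 2) := fun g hg ↦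
    ((measurable_snd.sub (hg.comp measurable_fst)).pow_const 2).ennreal_ofReal
  have hfstar_meas : Measurable fstar := by
    rw [funext hfstar]
    exact (measurable_snd.stronglyMeasurable.integral_kernel_prod_right (κ := ν)).measurable
  intro f hf
  refine iSup₂_le fun m hm ↦ ?_
  have := hM m hm
  refine Measure.lintegral_compProd_le_of_forall_le (hsq_err fstar hfstar_meas) fun x ↦ ?_
  calc ∫⁻ y, ENNReal.ofReal ((y - fstar x) ^ 2) ∂ν x
      = eVar[id; ν x] := by rw [evariance_eq_lintegral_ofReal, hfstar x]; rfl
    _ ≤ ∫⁻ y, ENNReal.ofReal ((y - f x) ^ 2) ∂ν x :=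
      evariance_le_lintegral_sub_sq aestronglyMeasurable_id (f x)
    _ = ∫⁻ p, ENNReal.ofReal ((p.2 - f p.1) ^ 2) ∂(Measure.dirac x ⊗ₘ ν) :=
      (Measure.lintegral_dirac_compProd (hsq_err f hf) x).symm
    _ ≤ _ := le_iSup₂_of_le (Measure.dirac x) (hdirac x) le_rfl

/-- Minimax optimality of the causal predictor over any family of intervention
distributions containing all Dirac measures: for a Markov kernel `ν` from `X` to `ℝ`
with finite second moments, conditional mean `fstar`, and a set `M` of probability
measures on `X` containing every Dirac measure `δ_x`, for every measurable `f : X → ℝ`,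
`⨆ m ∈ M, ∫⁻ (y - fstar x)² d(m ⊗ₘ ν) ≤ ⨆ m ∈ M, ∫⁻ (y - f x)² d(m ⊗ₘ ν)`. -/
theorem minimax_optimality_over_family_containing_diracs
    {X : Type*} [MeasurableSpace X] [Nonempty X]
    (ν : Kernel X ℝ) [IsMarkovKernel ν]
    (hν : ∀ x, Integrable (fun y => y ^ 2) (ν x))
    (fstar : X → ℝ) (hfstar : ∀ x, fstar x = ∫ y, y ∂ν x)
    (M : Set (Measure X)) (hM : ∀ m ∈ M, IsProbabilityMeasure m)
    (hdirac : ∀ x : X, Measure.dirac x ∈ M) :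
    ∀ f : X → ℝ, Measurable f →
      (⨆ m ∈ M, ∫⁻ p : X × ℝ, ENNReal.ofReal ((p.2 - fstar p.1) ^ 2) ∂(m ⊗ₘ ν))
        ≤ ⨆ m ∈ M, ∫⁻ p : X × ℝ, ENNReal.ofReal ((p.2 - f p.1) ^ 2) ∂(m ⊗ₘ ν) :=
  minimax_optimality_over_family_containing_diracs_general ν fstar hfstar M hM hdirac
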